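/- Let M be a pointed metric space such that SA(M, ℝ) is dense in Lip₀(M, ℝ), let ρ ∈ [0,1), and let Y be a real Banach space having ACK structure with parameter ρ witnessed by a 1-norming set Γ ⊆ B_{Y*}. Then every Γ-flat map T ∈ Lip₀(M, Y) lies in the ‖·‖_L-closure of SA(M, Y). -/

import Mathlib

open Set Metric NNReal MeasureTheory

/-- A Lipschitz map vanishing at the base point `z`, i.e. an element of `Lip₀(M,Y)`. -/
def IsLip0 {M Y : Type*} [MetricSpace M] [NormedAddCommGroup Y]
    (z : M) (F : M → Y) : Prop :=
  (∃ K : ℝ≥0, LipschitzWith K F) ∧ F z = 0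

/-- The Lipschitz norm `‖F‖_L = sup {‖F p - F q‖ / d(p,q) : p ≠ q}`. -/
noncomputable def lipNorm {M Y : Type*} [MetricSpace M] [NormedAddCommGroup Y]
    (F : M → Y) : ℝ :=
  sSup {r : ℝ | ∃ p q : M, p ≠ q ∧ r = ‖F p - F q‖ / dist p q}

/-- `F` strongly attains its norm. -/
def StronglyAttains {M Y : Type*} [MetricSpace M] [NormedAddCommGroup Y]
    (F : M → Y) : Prop :=
  ∃ p q : M, p ≠ q ∧ ‖F p - F q‖ = lipNorm F * dist p q

/-- `F` is Lipschitz compact: its Lipschitz image is relatively compact. -/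
def IsLipCompact {M Y : Type*} [MetricSpace M] [NormedAddCommGroup Y] [NormedSpace ℝ Y]
    (F : M → Y) : Prop :=
  IsCompact (closure {y : Y | ∃ p q : M, p ≠ q ∧ y = (dist p q)⁻¹ • (F p - F q)})

/-- The pair `(M,Y)` has the Lip-BPB property witnessed by the function `η`. -/
def LipBPBWith (M : Type*) [MetricSpace M] (z : M)
    (Y : Type*) [NormedAddCommGroup Y] (η : ℝ → ℝ) : Prop :=
  (∀ ε > 0, η ε > 0) ∧
  ∀ ε > 0, ∀ F : M → Y, IsLip0 z F → lipNorm F = 1 →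
    ∀ p q : M, p ≠ q → ‖F p - F q‖ > (1 - η ε) * dist p q →
      ∃ G : M → Y, IsLip0 z G ∧ ∃ r s : M, r ≠ s ∧
        ‖G r - G s‖ = dist r s ∧ lipNorm G = 1 ∧
        lipNorm (fun x => G x - F x) < ε ∧
        (dist p r + dist q s) / dist p q < ε

/-- The pair `(M,Y)` has the Lip-BPB property. -/
def LipBPB (M : Type*) [MetricSpace M] (z : M)
    (Y : Type*) [NormedAddCommGroup Y] : Prop :=
  ∃ η : ℝ → ℝ, LipBPBWith M z Y η

/-- The pair `(M,Y)` has the Lip-BPB property for Lipschitz compact maps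
witnessed by the function `η`. -/
def LipBPBCompactWith (M : Type*) [MetricSpace M] (z : M)
    (Y : Type*) [NormedAddCommGroup Y] [NormedSpace ℝ Y] (η : ℝ → ℝ) : Prop :=
  (∀ ε > 0, η ε > 0) ∧
  ∀ ε > 0, ∀ F : M → Y, IsLip0 z F → IsLipCompact F → lipNorm F = 1 →
    ∀ p q : M, p ≠ q → ‖F p - F q‖ > (1 - η ε) * dist p q →
      ∃ G : M → Y, IsLip0 z G ∧ IsLipCompact G ∧ ∃ r s : M, r ≠ s ∧
        ‖G r - G s‖ = dist r s ∧ lipNorm G = 1 ∧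
        lipNorm (fun x => G x - F x) < ε ∧
        (dist p r + dist q s) / dist p q < ε

/-- The pair `(M,Y)` has the Lip-BPB property for Lipschitz compact maps. -/
def LipBPBCompact (M : Type*) [MetricSpace M] (z : M)
    (Y : Type*) [NormedAddCommGroup Y] [NormedSpace ℝ Y] : Prop :=
  ∃ η : ℝ → ℝ, LipBPBCompactWith M z Y η

/-- `SA(M,Y)` is dense in `Lip₀(M,Y)`. -/
def SADense (M : Type*) [MetricSpace M] (z : M)
    (Y : Type*) [NormedAddCommGroup Y] : Prop :=
  ∀ F : M → Y, IsLip0 z F → ∀ ε > 0,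
    ∃ G : M → Y, IsLip0 z G ∧ StronglyAttains G ∧ lipNorm (fun x => G x - F x) < ε

/-- `SA_K(M,Y)` is dense in `Lipc(M,Y)`. -/
def SAKDense (M : Type*) [MetricSpace M] (z : M)
    (Y : Type*) [NormedAddCommGroup Y] [NormedSpace ℝ Y] : Prop :=
  ∀ F : M → Y, IsLip0 z F → IsLipCompact F → ∀ ε > 0,
    ∃ G : M → Y, IsLip0 z G ∧ IsLipCompact G ∧ StronglyAttains G ∧
      lipNorm (fun x => G x - F x) < ε

/-- A set of functionals on `Y` is weak-star open. -/
def IsWeakStarOpen {Y : Type*} [NormedAddCommGroup Y] [NormedSpace ℝ Y]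
    (U : Set (Y →L[ℝ] ℝ)) : Prop :=
  IsOpen (X := WeakDual ℝ Y) (StrongDual.toWeakDual '' U)

/-- `Γ ⊆ B_{Y*}` is a 1-norming set. -/
def IsOneNorming {Y : Type*} [NormedAddCommGroup Y] [NormedSpace ℝ Y]
    (Γ : Set (Y →L[ℝ] ℝ)) : Prop :=
  (∀ φ ∈ Γ, ‖φ‖ ≤ 1) ∧ ∀ y : Y, ‖y‖ = sSup {t : ℝ | ∃ φ ∈ Γ, t = |φ y|}

/-- `Y` has ACK structure with parameter `ρ`, witnessed by the 1-norming set `Γ`. -/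
def ACKWith (Y : Type*) [NormedAddCommGroup Y] [NormedSpace ℝ Y]
    (ρ : ℝ) (Γ : Set (Y →L[ℝ] ℝ)) : Prop :=
  IsOneNorming Γ ∧
  ∀ ε > (0 : ℝ), ∀ U : Set (Y →L[ℝ] ℝ), U.Nonempty → U ⊆ Γ →
    (∃ W : Set (Y →L[ℝ] ℝ), IsWeakStarOpen W ∧ U = W ∩ Γ) →
    ∃ V ⊆ U, V.Nonempty ∧ ∃ y₁ ∈ V, ∃ e : Y, ‖e‖ = 1 ∧ ∃ F : Y →L[ℝ] Y,
      ‖F e‖ = 1 ∧ ‖F‖ = 1 ∧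
      y₁ (F e) = 1 ∧
      y₁.comp F = y₁ ∧
      (∀ φ ∈ Γ, φ ∉ {ψ ∈ Γ | ‖ψ.comp F‖ + (1 - ε) * ‖ψ - ψ.comp F‖ ≤ 1} →
        |φ (F e)| ≤ ρ) ∧
      (∀ φ ∈ Γ, ∃ (n : ℕ) (v : Fin n → (Y →L[ℝ] ℝ)) (c : Fin n → ℝ),
        (∀ k, v k ∈ V) ∧ (∑ k, |c k|) ≤ 1 ∧
        ‖φ.comp F - ∑ k, c k • v k‖ < ε) ∧
      (∀ φ ∈ V, |φ e - 1| ≤ ε)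

/-- `Y` has ACK structure with parameter `ρ`. -/
def HasACK (Y : Type*) [NormedAddCommGroup Y] [NormedSpace ℝ Y] (ρ : ℝ) : Prop :=
  ∃ Γ : Set (Y →L[ℝ] ℝ), ACKWith Y ρ Γ

/-- `T : M → Y` is a `Γ`-flat map. -/
def IsGammaFlat {M Y : Type*} [MetricSpace M] [NormedAddCommGroup Y] [NormedSpace ℝ Y]
    (Γ : Set (Y →L[ℝ] ℝ)) (T : M → Y) : Prop :=
  ∀ U : Set (Y →L[ℝ] ℝ), IsWeakStarOpen U → (U ∩ Γ).Nonempty → ∀ δ > (0 : ℝ),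
    ∃ V : Set (Y →L[ℝ] ℝ), IsWeakStarOpen V ∧ V ⊆ U ∧ (V ∩ Γ).Nonempty ∧
      ∀ φ ∈ V ∩ Γ, ∀ ψ ∈ V ∩ Γ, lipNorm (fun x => φ (T x) - ψ (T x)) < δ

/-!
Let `R = ‖T‖_L > 0`. Pick `p ≠ q` with `‖T p - T q‖ > (1 - δ) R d(p,q)`; the functionals of `Γ`
almost norming `T p - T q` form a weak-star slice, which flatness shrinks to a slice `W` on which
`y* ∘ T` varies by less than `δ R`. The ACK structure applied to `W ∩ Γ` gives `y₁`, `e` and `F`,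
and density of `SA(M, ℝ)` a strongly attaining `g` close to `y₁ ∘ T`. The map
`G = T - F ∘ T + (1 + c) g · F e` is then close to `T`, satisfies `y₁ ∘ G = (1 + c) g`, and has
`‖G‖_L ≤ (1 + c) ‖g‖_L`: on `V₁` because `y* ∘ G` splits along `y* - y* ∘ F` and `y* ∘ F`, off `V₁`
because `|y*(F e)| ≤ ρ < 1` absorbs the factor `1 + c`. So `G` attains its norm where `g` does.
-/

open Filter Topology

section LipNorm

variable {M Y : Type*} [MetricSpace M] [NormedAddCommGroup Y] {F : M → Y} {K : ℝ≥0}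

lemma lipNorm_nonneg (F : M → Y) : 0 ≤ lipNorm F :=
  Real.sSup_nonneg fun _ ⟨_, _, _, hr⟩ => hr ▸ by positivity

lemma lipNorm_le {K : ℝ} (hK : 0 ≤ K) (h : ∀ p q, ‖F p - F q‖ ≤ K * dist p q) :
    lipNorm F ≤ K :=
  Real.sSup_le (fun _ ⟨p, q, hpq, hr⟩ => hr ▸ (div_le_iff₀ (dist_pos.mpr hpq)).mpr (h p q)) hK

lemma exists_lt_norm_sub_of_lt_lipNorm {b : ℝ} (hb : 0 ≤ b) (h : b < lipNorm F) :
    ∃ p q, p ≠ q ∧ b * dist p q < ‖F p - F q‖ := by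
  by_contra! hF
  refine (lipNorm_le hb fun p q => ?_).not_gt h
  rcases eq_or_ne p q with rfl | hpq
  · simp
  · exact hF p q hpq

namespace LipschitzWith

lemma norm_sub_le_mul (hF : LipschitzWith K F) (p q : M) : ‖F p - F q‖ ≤ K * dist p q := by
  rw [← dist_eq_norm]
  exact hF.dist_le_mul p q

lemma norm_sub_div_dist_le_lipNorm (hF : LipschitzWith K F) {p q : M} (hpq : p ≠ q) :
    ‖F p - F q‖ / dist p q ≤ lipNorm F := by
  refine le_csSup ⟨K, ?_⟩ ⟨p, q, hpq, rfl⟩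
  rintro _ ⟨p, q, hpq, rfl⟩
  exact (div_le_iff₀ (dist_pos.mpr hpq)).mpr (hF.norm_sub_le_mul p q)

lemma norm_sub_le_lipNorm_mul (hF : LipschitzWith K F) (p q : M) :
    ‖F p - F q‖ ≤ lipNorm F * dist p q := by
  rcases eq_or_ne p q with rfl | hpq
  · simp
  · exact (div_le_iff₀ (dist_pos.mpr hpq)).mp (hF.norm_sub_div_dist_le_lipNorm hpq)

lemma le_lipNorm (hF : LipschitzWith K F) {p q : M} (hpq : p ≠ q) {b : ℝ}
    (h : b * dist p q ≤ ‖F p - F q‖) : b ≤ lipNorm F :=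
  ((le_div_iff₀ (dist_pos.mpr hpq)).mpr h).trans (hF.norm_sub_div_dist_le_lipNorm hpq)

lemma sub_lipNorm_sub_le_lipNorm {G : M → Y} {K' : ℝ≥0} (hG : LipschitzWith K G)
    (hGF : LipschitzWith K' fun x => G x - F x) {p q : M} (hpq : p ≠ q) {b : ℝ}
    (h : b * dist p q ≤ ‖F p - F q‖) : b - lipNorm (fun x => G x - F x) ≤ lipNorm G := by
  refine hG.le_lipNorm hpq ?_
  have hsplit : F p - F q = (G p - G q) - ((G p - F p) - (G q - F q)) := by abel
  calc (b - lipNorm fun x => G x - F x) * dist p q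
      ≤ ‖F p - F q‖ - ‖(G p - F p) - (G q - F q)‖ := by
        rw [sub_mul]; linarith [hGF.norm_sub_le_lipNorm_mul p q]
    _ ≤ ‖G p - G q‖ := by
        rw [sub_le_iff_le_add, hsplit]; exact _root_.norm_sub_le _ _

end LipschitzWith

lemma stronglyAttains_of_norm_sub_eq {K : ℝ} (hK : 0 ≤ K)
    (h : ∀ p q, ‖F p - F q‖ ≤ K * dist p q) {p q : M} (hpq : p ≠ q)
    (heq : ‖F p - F q‖ = K * dist p q) : StronglyAttains F := by
  have hF : LipschitzWith K.toNNReal F :=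
    .of_dist_le' fun p q => by simpa only [dist_eq_norm] using h p q
  have hlip : lipNorm F = K := le_antisymm (lipNorm_le hK h) (hF.le_lipNorm hpq heq.ge)
  exact ⟨p, q, hpq, hlip ▸ heq⟩

lemma stronglyAttains_of_lipNorm_eq_zero [Nontrivial M] (hF : LipschitzWith K F)
    (h : lipNorm F = 0) : StronglyAttains F := by
  obtain ⟨p, q, hpq⟩ := exists_pair_ne M
  refine ⟨p, q, hpq, le_antisymm (hF.norm_sub_le_lipNorm_mul p q) ?_⟩
  rw [h, zero_mul]
  positivity

lemma SADense.nontrivial {z : M} (h : SADense M z Y) : Nontrivial M := by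
  obtain ⟨-, -, ⟨p, q, hpq, -⟩, -⟩ := h 0 ⟨⟨0, LipschitzWith.const 0⟩, rfl⟩ 1 one_pos
  exact ⟨⟨p, q, hpq⟩⟩

end LipNorm

namespace IsOneNorming

variable {Y : Type*} [NormedAddCommGroup Y] [NormedSpace ℝ Y] {Γ : Set (Y →L[ℝ] ℝ)}

lemma abs_apply_le (hΓ : IsOneNorming Γ) {φ : Y →L[ℝ] ℝ} (hφ : φ ∈ Γ) (y : Y) :
    |φ y| ≤ ‖y‖ := by
  simpa only [Real.norm_eq_abs, one_mul] using φ.le_of_opNorm_le (hΓ.1 φ hφ) y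

lemma norm_le (hΓ : IsOneNorming Γ) {y : Y} {b : ℝ} (hb : 0 ≤ b) (h : ∀ φ ∈ Γ, |φ y| ≤ b) :
    ‖y‖ ≤ b := by
  rw [hΓ.2 y]
  exact Real.sSup_le (fun _ ⟨φ, hφ, ht⟩ => ht ▸ h φ hφ) hb

lemma exists_lt_abs (hΓ : IsOneNorming Γ) {y : Y} {b : ℝ} (hb : 0 ≤ b) (h : b < ‖y‖) :
    ∃ φ ∈ Γ, b < |φ y| := by
  by_contra! hy
  exact (hΓ.norm_le hb hy).not_gt h

lemma norm_sub_le_of_forall (hΓ : IsOneNorming Γ) {M : Type*} [MetricSpace M] {F : M → Y} {K : ℝ}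
    (hK : 0 ≤ K)
    (h : ∀ φ ∈ Γ, ∀ p q, |φ (F p - F q)| ≤ K * dist p q) (p q : M) :
    ‖F p - F q‖ ≤ K * dist p q :=
  hΓ.norm_le (by positivity) fun φ hφ => h φ hφ p q

end IsOneNorming

section Slice

variable {M Y : Type*} [MetricSpace M] [NormedAddCommGroup Y] [NormedSpace ℝ Y]

lemma isWeakStarOpen_setOf_lt_abs (a : ℝ) (y : Y) :
    IsWeakStarOpen {φ : Y →L[ℝ] ℝ | a < |φ y|} := by
  rw [IsWeakStarOpen, StrongDual.toWeakDual.image_eq_preimage_symm]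
  exact isOpen_lt continuous_const (WeakDual.eval_continuous y).abs

lemma IsGammaFlat.exists_flat_slice {Γ : Set (Y →L[ℝ] ℝ)} {T : M → Y} (hT : IsGammaFlat Γ T)
    (hΓ : IsOneNorming Γ) {δ : ℝ} (hδ : 0 < δ) (hδ1 : δ ≤ 1) (hR : 0 < lipNorm T) :
    ∃ W, IsWeakStarOpen W ∧ (W ∩ Γ).Nonempty ∧
      (∀ φ ∈ W ∩ Γ, ∀ ψ ∈ W ∩ Γ, lipNorm (fun x => φ (T x) - ψ (T x)) < δ * lipNorm T) ∧
      ∃ p q, p ≠ q ∧ ∀ φ ∈ W, (1 - δ) * lipNorm T * dist p q < |φ (T p - T q)| := by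
  have hb : 0 ≤ (1 - δ) * lipNorm T := mul_nonneg (sub_nonneg.mpr hδ1) hR.le
  obtain ⟨p, q, hpq, hTpq⟩ := exists_lt_norm_sub_of_lt_lipNorm hb (by nlinarith)
  obtain ⟨φ₀, hφ₀, hφ₀T⟩ := hΓ.exists_lt_abs (by positivity) hTpq
  obtain ⟨W, hW, hWU, hWΓ, hWflat⟩ :=
    hT _ (isWeakStarOpen_setOf_lt_abs _ (T p - T q)) ⟨φ₀, hφ₀T, hφ₀⟩ _ (mul_pos hδ hR)
  exact ⟨W, hW, hWΓ, hWflat, p, q, hpq, fun φ hφ => hWU hφ⟩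

end Slice

section Hull

variable {Y : Type*} [NormedAddCommGroup Y] [NormedSpace ℝ Y]

lemma abs_sum_mul_le {ι : Type*} [Fintype ι] {c x : ι → ℝ} {a : ℝ} (hc : ∑ i, |c i| ≤ 1)
    (ha : 0 ≤ a) (hx : ∀ i, |x i| ≤ a) : |∑ i, c i * x i| ≤ a :=
  calc |∑ i, c i * x i| ≤ ∑ i, |c i| * a :=
        (Finset.abs_sum_le_sum_abs _ _).trans <| Finset.sum_le_sum fun i _ => by
          rw [abs_mul]; exact mul_le_mul_of_nonneg_left (hx i) (abs_nonneg _)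
    _ = (∑ i, |c i|) * a := by rw [Finset.sum_mul]
    _ ≤ a := mul_le_of_le_one_left ha hc

lemma abs_apply_sub_sum_mul_le {ι : Type*} [Fintype ι] {ψ : Y →L[ℝ] ℝ} {v : ι → Y →L[ℝ] ℝ}
    {c : ι → ℝ} {δ a β : ℝ} (hc : ∑ i, |c i| ≤ 1) (hψ : ‖ψ - ∑ i, c i • v i‖ ≤ δ) (ha : 0 ≤ a)
    {w : Y} (hw : ∀ i, |v i w - β| ≤ a) : |ψ w - (∑ i, c i) * β| ≤ a + δ * ‖w‖ := by
  have hsplit : ψ w - (∑ i, c i) * β = ∑ i, c i * (v i w - β) + (ψ - ∑ i, c i • v i) w := by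
    simp only [sub_apply, sum_apply, smul_apply, smul_eq_mul, mul_sub, Finset.sum_sub_distrib,
      Finset.sum_mul]
    ring
  have herr : |(ψ - ∑ i, c i • v i) w| ≤ δ * ‖w‖ := (ψ - _).le_of_opNorm_le hψ w
  rw [hsplit]
  exact (abs_add_le _ _).trans (add_le_add (abs_sum_mul_le hc ha hw) herr)

lemma abs_apply_sub_mul_apply_le {ψ y₁ : Y →L[ℝ] ℝ} {V : Set (Y →L[ℝ] ℝ)} {δ a : ℝ} {e u : Y}
    (hψ : ∃ (n : ℕ) (v : Fin n → (Y →L[ℝ] ℝ)) (c : Fin n → ℝ),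
      (∀ k, v k ∈ V) ∧ (∑ k, |c k|) ≤ 1 ∧ ‖ψ - ∑ k, c k • v k‖ < δ)
    (he : ‖e‖ = 1) (ha : 0 ≤ a) (hu : ∀ v ∈ V, |v u - y₁ u| ≤ a)
    (hVe : ∀ v ∈ V, |v e - 1| ≤ δ) :
    |ψ u - y₁ u * ψ e| ≤ a + δ * ‖u‖ + 2 * δ * |y₁ u| := by
  obtain ⟨n, v, c, hv, hc, hψ⟩ := hψ
  have hδ : 0 ≤ δ := (norm_nonneg _).trans hψ.le
  have hψu := abs_apply_sub_sum_mul_le hc hψ.le ha fun k => hu _ (hv k)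
  have hψe := abs_apply_sub_sum_mul_le hc hψ.le hδ fun k => hVe _ (hv k)
  rw [he, mul_one, mul_one] at hψe
  calc |ψ u - y₁ u * ψ e|
      = |(ψ u - (∑ k, c k) * y₁ u) - y₁ u * (ψ e - ∑ k, c k)| := by ring_nf
    _ ≤ |ψ u - (∑ k, c k) * y₁ u| + |y₁ u| * |ψ e - ∑ k, c k| := by
        rw [← abs_mul]; exact abs_sub _ _
    _ ≤ (a + δ * ‖u‖) + |y₁ u| * (δ + δ) := by gcongr
    _ = a + δ * ‖u‖ + 2 * δ * |y₁ u| := by ring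

end Hull

lemma abs_apply_sub_mul_apply_le_of_flat {M Y : Type*} [MetricSpace M] [NormedAddCommGroup Y]
    [NormedSpace ℝ Y] {T : M → Y} {K : ℝ≥0} (hT : LipschitzWith K T) {ψ y₁ : Y →L[ℝ] ℝ}
    {V : Set (Y →L[ℝ] ℝ)} {δ : ℝ} {e : Y} (hy₁ : ‖y₁‖ ≤ 1)
    (hψ : ∃ (n : ℕ) (v : Fin n → (Y →L[ℝ] ℝ)) (c : Fin n → ℝ),
      (∀ k, v k ∈ V) ∧ (∑ k, |c k|) ≤ 1 ∧ ‖ψ - ∑ k, c k • v k‖ < δ)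
    (he : ‖e‖ = 1) (hVT : ∀ v ∈ V, lipNorm (fun x => v (T x) - y₁ (T x)) < δ * lipNorm T)
    (hVe : ∀ v ∈ V, |v e - 1| ≤ δ) (p q : M) :
    |ψ (T p - T q) - y₁ (T p - T q) * ψ e| ≤ 4 * δ * lipNorm T * dist p q := by
  have hδ : 0 ≤ δ := by
    obtain ⟨_, _, _, -, -, hψδ⟩ := hψ
    exact (norm_nonneg _).trans hψδ.le
  have hR := lipNorm_nonneg T
  have hTpq : ‖T p - T q‖ ≤ lipNorm T * dist p q := hT.norm_sub_le_lipNorm_mul p q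
  have hy₁T : |y₁ (T p - T q)| ≤ lipNorm T * dist p q := by
    rw [← Real.norm_eq_abs, ← one_mul (lipNorm T * _)]
    exact (y₁.le_of_opNorm_le hy₁ _).trans (by gcongr)
  have hu : ∀ v ∈ V, |v (T p - T q) - y₁ (T p - T q)| ≤ δ * lipNorm T * dist p q := by
    intro v hv
    have hvT := ((v.lipschitz.comp hT).sub (y₁.lipschitz.comp hT)).norm_sub_le_lipNorm_mul p q
    simp only [Function.comp_apply, Real.norm_eq_abs] at hvT
    rw [map_sub, map_sub, sub_sub_sub_comm]
    exact hvT.trans (mul_le_mul_of_nonneg_right (hVT v hv).le dist_nonneg)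
  calc _ ≤ δ * lipNorm T * dist p q + δ * ‖T p - T q‖ + 2 * δ * |y₁ (T p - T q)| :=
        abs_apply_sub_mul_apply_le hψ he (by positivity) hu hVe
    _ ≤ δ * lipNorm T * dist p q + δ * (lipNorm T * dist p q)
          + 2 * δ * (lipNorm T * dist p q) := by gcongr
    _ = 4 * δ * lipNorm T * dist p q := by ring

section Perturbation

variable {M Y : Type*} [NormedAddCommGroup Y] [NormedSpace ℝ Y]

def perturb (T : M → Y) (F : Y →L[ℝ] Y) (e : Y) (a : M → ℝ) (x : M) : Y :=
  T x - F (T x) + a x • F e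

variable {T : M → Y} {F : Y →L[ℝ] Y} {e : Y} {a : M → ℝ}

lemma apply_perturb (φ : Y →L[ℝ] ℝ) (x : M) :
    φ (perturb T F e a x) = φ (T x) - φ (F (T x)) + a x * φ (F e) := by
  simp [perturb]

lemma apply_perturb_of_comp_eq {y₁ : Y →L[ℝ] ℝ} (hy₁F : y₁.comp F = y₁) (hy₁Fe : y₁ (F e) = 1)
    (x : M) : y₁ (perturb T F e a x) = a x := by
  have hFTx : y₁ (F (T x)) = y₁ (T x) := DFunLike.congr_fun hy₁F (T x)
  rw [apply_perturb, hFTx, hy₁Fe]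
  ring

lemma abs_apply_perturb_sub_le [MetricSpace M] {φ : Y →L[ℝ] ℝ} {κ K : ℝ} (he : ‖e‖ = 1)
    (hφ : ‖φ.comp F‖ + κ * ‖φ - φ.comp F‖ ≤ 1) {p q : M}
    (hT : ‖T p - T q‖ ≤ κ * K * dist p q) (ha : |a p - a q| ≤ K * dist p q) :
    |φ (perturb T F e a p - perturb T F e a q)| ≤ K * dist p q := by
  have hsplit : φ (perturb T F e a p - perturb T F e a q)
      = (φ - φ.comp F) (T p - T q) + (a p - a q) * (φ.comp F) e := by
    simp only [map_sub, apply_perturb, sub_apply, ContinuousLinearMap.comp_apply]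
    ring
  have hKd : 0 ≤ K * dist p q := (abs_nonneg _).trans ha
  have hT' : |(φ - φ.comp F) (T p - T q)| ≤ ‖φ - φ.comp F‖ * (κ * K * dist p q) :=
    ((φ - φ.comp F).le_opNorm _).trans (mul_le_mul_of_nonneg_left hT (norm_nonneg _))
  have hFe : |(φ.comp F) e| ≤ ‖φ.comp F‖ := by
    simpa only [he, mul_one, Real.norm_eq_abs] using (φ.comp F).le_opNorm e
  rw [hsplit]
  calc _ ≤ |(φ - φ.comp F) (T p - T q)| + |a p - a q| * |(φ.comp F) e| := by
        rw [← abs_mul]; exact abs_add_le _ _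
    _ ≤ ‖φ - φ.comp F‖ * (κ * K * dist p q) + K * dist p q * ‖φ.comp F‖ := by gcongr
    _ = (‖φ.comp F‖ + κ * ‖φ - φ.comp F‖) * (K * dist p q) := by ring
    _ ≤ K * dist p q := mul_le_of_le_one_left hKd hφ

lemma abs_apply_perturb_sub_sub_le {φ y₁ : Y →L[ℝ] ℝ} {β γ : ℝ} {p q : M}
    (hFT : |φ (F (T p - T q)) - y₁ (T p - T q) * φ (F e)| ≤ β)
    (ha : |a p - a q - y₁ (T p - T q)| ≤ γ) :
    |φ ((perturb T F e a p - T p) - (perturb T F e a q - T q))| ≤ β + γ * |φ (F e)| := by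
  have hsplit : φ ((perturb T F e a p - T p) - (perturb T F e a q - T q))
      = -(φ (F (T p - T q)) - y₁ (T p - T q) * φ (F e))
        + (a p - a q - y₁ (T p - T q)) * φ (F e) := by
    simp only [map_sub, apply_perturb]
    ring
  rw [hsplit]
  calc _ ≤ _ := abs_add_le _ _
    _ ≤ β + γ * |φ (F e)| := by rw [abs_neg, abs_mul]; gcongr

variable [MetricSpace M] {Γ : Set (Y →L[ℝ] ℝ)} {y₁ : Y →L[ℝ] ℝ}

lemma norm_perturb_sub_le (hΓ : IsOneNorming Γ) {ρ δ R K β γ : ℝ} (he : ‖e‖ = 1)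
    (hρF : ∀ φ ∈ Γ, φ ∉ {ψ ∈ Γ | ‖ψ.comp F‖ + (1 - δ) * ‖ψ - ψ.comp F‖ ≤ 1} → |φ (F e)| ≤ ρ)
    (hFT : ∀ φ ∈ Γ, ∀ p q, |φ (F (T p - T q)) - y₁ (T p - T q) * φ (F e)| ≤ β * dist p q)
    (hTR : ∀ p q, ‖T p - T q‖ ≤ R * dist p q) (ha : ∀ p q, |a p - a q| ≤ K * dist p q)
    (haT : ∀ p q, |a p - a q - y₁ (T p - T q)| ≤ γ * dist p q) (hK : 0 ≤ K)
    (hRK : R ≤ (1 - δ) * K) (hRβγ : R + β + ρ * γ ≤ K) (p q : M) :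
    ‖perturb T F e a p - perturb T F e a q‖ ≤ K * dist p q := by
  refine hΓ.norm_sub_le_of_forall hK (fun φ hφ p q => ?_) p q
  by_cases hφF : ‖φ.comp F‖ + (1 - δ) * ‖φ - φ.comp F‖ ≤ 1
  · exact abs_apply_perturb_sub_le he hφF ((hTR p q).trans (by gcongr)) (ha p q)
  have hρφ : |φ (F e)| ≤ ρ := hρF φ hφ fun h => hφF h.2
  have hγ : 0 ≤ γ * dist p q := (abs_nonneg _).trans (haT p q)
  have hGT := abs_apply_perturb_sub_sub_le (hFT φ hφ p q) (haT p q)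
  calc |φ (perturb T F e a p - perturb T F e a q)|
      = |φ (T p - T q) + φ ((perturb T F e a p - T p) - (perturb T F e a q - T q))| := by
        rw [← map_add]; congr 2; abel
    _ ≤ R * dist p q + (β * dist p q + γ * dist p q * ρ) :=
        (abs_add_le _ _).trans <| add_le_add ((hΓ.abs_apply_le hφ _).trans (hTR p q))
          (hGT.trans (by gcongr))
    _ = (R + β + ρ * γ) * dist p q := by ring
    _ ≤ K * dist p q := by gcongr

lemma lipNorm_perturb_sub_le (hΓ : IsOneNorming Γ) {β γ : ℝ} (hFe : ‖F e‖ ≤ 1)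
    (hFT : ∀ φ ∈ Γ, ∀ p q, |φ (F (T p - T q)) - y₁ (T p - T q) * φ (F e)| ≤ β * dist p q)
    (haT : ∀ p q, |a p - a q - y₁ (T p - T q)| ≤ γ * dist p q) (hβγ : 0 ≤ β + γ) :
    lipNorm (fun x => perturb T F e a x - T x) ≤ β + γ := by
  refine lipNorm_le hβγ (hΓ.norm_sub_le_of_forall hβγ fun φ hφ p q => ?_)
  have hφFe : |φ (F e)| ≤ 1 := (hΓ.abs_apply_le hφ _).trans hFe
  have hγ : 0 ≤ γ * dist p q := (abs_nonneg _).trans (haT p q)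
  calc _ ≤ β * dist p q + γ * dist p q * |φ (F e)| :=
        abs_apply_perturb_sub_sub_le (hFT φ hφ p q) (haT p q)
    _ ≤ β * dist p q + γ * dist p q * 1 := by gcongr
    _ = (β + γ) * dist p q := by ring

end Perturbation

lemma StronglyAttains.of_comp_eq_smul {M Y : Type*} [MetricSpace M] [NormedAddCommGroup Y]
    [NormedSpace ℝ Y] {g : M → ℝ} (hg : StronglyAttains g) {G : M → Y} {y₁ : Y →L[ℝ] ℝ}
    (hy₁ : ‖y₁‖ ≤ 1) {k : ℝ} (hk : 0 ≤ k) (hG : ∀ p q, ‖G p - G q‖ ≤ k * lipNorm g * dist p q)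
    (hy₁G : ∀ x, y₁ (G x) = k * g x) : StronglyAttains G := by
  obtain ⟨r, s, hrs, hgrs⟩ := hg
  refine stronglyAttains_of_norm_sub_eq (mul_nonneg hk (lipNorm_nonneg g)) hG hrs
    (le_antisymm (hG r s) ?_)
  calc k * lipNorm g * dist r s = |y₁ (G r - G s)| := by
        rw [map_sub, hy₁G, hy₁G, ← mul_sub, abs_mul, abs_of_nonneg hk, ← Real.norm_eq_abs, hgrs,
          mul_assoc]
    _ ≤ ‖G r - G s‖ := by
        simpa only [Real.norm_eq_abs, one_mul] using y₁.le_of_opNorm_le hy₁ (G r - G s)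

lemma exists_ack_constants {ρ η : ℝ} (hρ : ρ < 1) (hη : 0 < η) :
    ∃ δ c : ℝ, 0 < δ ∧ δ < 1 ∧ 0 < c ∧ 4 * δ + ((1 + c) * δ + c) < η ∧
      ∀ R L : ℝ, 0 ≤ R → (1 - 2 * δ) * R ≤ L →
        R ≤ (1 - δ) * ((1 + c) * L) ∧
        R + 4 * δ * R + ρ * (((1 + c) * δ + c) * R) ≤ (1 + c) * L := by
  -- every condition is strict at `δ = 0` as soon as `0 < c < η`, hence holds for small `δ > 0`
  obtain ⟨c, hc, hcη⟩ : ∃ c, 0 < c ∧ c < η := ⟨η / 2, half_pos hη, half_lt_self hη⟩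
  have hnear : ∀ᶠ δ in 𝓝 (0 : ℝ), δ < 1 ∧ 1 < (1 - δ) * (1 + c) * (1 - 2 * δ) ∧
      1 + 4 * δ + ρ * ((1 + c) * δ + c) < (1 + c) * (1 - 2 * δ) ∧
      4 * δ + ((1 + c) * δ + c) < η := by
    simp only [eventually_and]
    refine ⟨eventually_lt_nhds one_pos, ?_, ?_, ?_⟩ <;>
      refine ContinuousAt.eventually_lt (by fun_prop) (by fun_prop) ?_ <;> nlinarith
  obtain ⟨δ, ⟨hδ1, h1, h2, h3⟩, hδ⟩ :=
    ((hnear.filter_mono nhdsWithin_le_nhds).and (self_mem_nhdsWithin (s := Set.Ioi 0))).exists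
  refine ⟨δ, c, hδ, hδ1, hc, h3, fun R L hR hL => ⟨?_, ?_⟩⟩
  · have h1c : 0 ≤ (1 - δ) * (1 + c) := by nlinarith
    calc R ≤ (1 - δ) * (1 + c) * (1 - 2 * δ) * R := le_mul_of_one_le_left hR h1.le
      _ = (1 - δ) * (1 + c) * ((1 - 2 * δ) * R) := by ring
      _ ≤ (1 - δ) * (1 + c) * L := by gcongr
      _ = (1 - δ) * ((1 + c) * L) := by ring
  · calc R + 4 * δ * R + ρ * (((1 + c) * δ + c) * R)
        = (1 + 4 * δ + ρ * ((1 + c) * δ + c)) * R := by ring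
      _ ≤ (1 + c) * ((1 - 2 * δ) * R) := by rw [← mul_assoc]; gcongr
      _ ≤ (1 + c) * L := by gcongr

theorem exists_stronglyAttains_near_of_ack {M Y : Type*} [MetricSpace M] [NormedAddCommGroup Y]
    [NormedSpace ℝ Y] {Γ : Set (Y →L[ℝ] ℝ)} (hΓ : IsOneNorming Γ) {z : M} {T : M → Y}
    {KT : ℝ≥0} (hT : LipschitzWith KT T) (hTz : T z = 0) {F : Y →L[ℝ] Y} {e : Y}
    {y₁ : Y →L[ℝ] ℝ} {ρ δ c ε : ℝ} (hy₁ : y₁ ∈ Γ) (he : ‖e‖ = 1) (hFe : ‖F e‖ = 1)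
    (hy₁Fe : y₁ (F e) = 1) (hy₁F : y₁.comp F = y₁)
    (hρF : ∀ φ ∈ Γ, φ ∉ {ψ ∈ Γ | ‖ψ.comp F‖ + (1 - δ) * ‖ψ - ψ.comp F‖ ≤ 1} → |φ (F e)| ≤ ρ)
    (hFT : ∀ φ ∈ Γ, ∀ p q,
      |φ (F (T p - T q)) - y₁ (T p - T q) * φ (F e)| ≤ 4 * δ * lipNorm T * dist p q)
    {g : M → ℝ} (hg : IsLip0 z g) (hgatt : StronglyAttains g)
    (hgT : lipNorm (fun x => g x - y₁ (T x)) < δ * lipNorm T) (hc : 0 < c)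
    (hRK : lipNorm T ≤ (1 - δ) * ((1 + c) * lipNorm g))
    (hRK' : lipNorm T + 4 * δ * lipNorm T + ρ * (((1 + c) * δ + c) * lipNorm T)
      ≤ (1 + c) * lipNorm g)
    (hε : (4 * δ + ((1 + c) * δ + c)) * lipNorm T < ε) :
    ∃ G : M → Y, IsLip0 z G ∧ StronglyAttains G ∧ lipNorm (fun x => G x - T x) < ε := by
  obtain ⟨⟨Kg, hgL⟩, hgz⟩ := hg
  have hδR : 0 < δ * lipNorm T := (lipNorm_nonneg _).trans_lt hgT
  have hK : 0 ≤ (1 + c) * lipNorm g := mul_nonneg (by linarith) (lipNorm_nonneg g)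
  set a : M → ℝ := fun x => (1 + c) * g x
  have ha : ∀ p q, |a p - a q| ≤ (1 + c) * lipNorm g * dist p q := fun p q => by
    rw [← mul_sub, abs_mul, abs_of_pos (by linarith), mul_assoc, ← Real.norm_eq_abs]
    gcongr
    exact hgL.norm_sub_le_lipNorm_mul p q
  have haT : ∀ p q, |a p - a q - y₁ (T p - T q)| ≤ ((1 + c) * δ + c) * lipNorm T * dist p q := by
    intro p q
    have hgy₁ := (hgL.sub (y₁.lipschitz.comp hT)).norm_sub_le_lipNorm_mul p q
    simp only [Function.comp_apply, Real.norm_eq_abs] at hgy₁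
    have hy₁T := (hΓ.abs_apply_le hy₁ _).trans (hT.norm_sub_le_lipNorm_mul p q)
    calc |a p - a q - y₁ (T p - T q)|
        = |(1 + c) * ((g p - y₁ (T p)) - (g q - y₁ (T q))) + c * y₁ (T p - T q)| := by
          simp only [a, map_sub]; ring_nf
      _ ≤ (1 + c) * (δ * lipNorm T * dist p q) + c * (lipNorm T * dist p q) := by
          refine (abs_add_le _ _).trans ?_
          rw [abs_mul, abs_mul, abs_of_pos (by linarith), abs_of_pos hc]
          gcongr
          exact hgy₁.trans (mul_le_mul_of_nonneg_right hgT.le dist_nonneg)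
      _ = ((1 + c) * δ + c) * lipNorm T * dist p q := by ring
  have hG := norm_perturb_sub_le hΓ he hρF hFT hT.norm_sub_le_lipNorm_mul ha haT hK hRK hRK'
  refine ⟨perturb T F e a, ⟨⟨_, .of_dist_le' fun p q => (dist_eq_norm _ _).trans_le (hG p q)⟩, ?_⟩,
    hgatt.of_comp_eq_smul (hΓ.1 y₁ hy₁) (by linarith) hG (apply_perturb_of_comp_eq hy₁F hy₁Fe),
    (lipNorm_perturb_sub_le hΓ hFe.le hFT haT (by nlinarith [lipNorm_nonneg T])).trans_lt
      (by linarith)⟩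
  simp [perturb, a, hTz, hgz]

theorem gammaFlat_mem_closure_SA_general {M Y : Type*} [MetricSpace M]
    [NormedAddCommGroup Y] [NormedSpace ℝ Y]
    (z : M) (hM : SADense M z ℝ)
    (ρ : ℝ) (hρ1 : ρ < 1)
    (Γ : Set (Y →L[ℝ] ℝ)) (hY : ACKWith Y ρ Γ) :
    ∀ T : M → Y, IsLip0 z T → IsGammaFlat Γ T → ∀ ε > (0 : ℝ),
      ∃ G : M → Y, IsLip0 z G ∧ StronglyAttains G ∧
        lipNorm (fun x => G x - T x) < ε := by
  obtain ⟨hΓ, hACK⟩ := hY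
  rintro T ⟨⟨KT, hT⟩, hTz⟩ hflat ε hε
  have := hM.nontrivial
  rcases (lipNorm_nonneg T).eq_or_lt with hR | hR
  · exact ⟨T, ⟨⟨KT, hT⟩, hTz⟩, stronglyAttains_of_lipNorm_eq_zero hT hR.symm,
      (lipNorm_le le_rfl (by simp)).trans_lt hε⟩
  obtain ⟨δ, c, hδ, hδ1, hc, hδc, hconst⟩ := exists_ack_constants hρ1 (div_pos hε hR)
  obtain ⟨W, hW, hWΓ, hWflat, p₀, q₀, hpq₀, hWT⟩ := hflat.exists_flat_slice hΓ hδ hδ1.le hR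
  obtain ⟨V, hVW, -, y₁, hy₁, e, he, F, hFe, -, hy₁Fe, hy₁F, hρF, hhull, hVe⟩ :=
    hACK δ hδ (W ∩ Γ) hWΓ inter_subset_right ⟨W, hW, rfl⟩
  have hy₁T : LipschitzWith (‖y₁‖₊ * KT) fun x => y₁ (T x) := y₁.lipschitz.comp hT
  obtain ⟨g, hg, hgatt, hgT⟩ := hM _ ⟨⟨_, hy₁T⟩, by simp [hTz]⟩ _ (mul_pos hδ hR)
  have hLg : (1 - 2 * δ) * lipNorm T ≤ lipNorm g := by
    obtain ⟨Kg, hgL⟩ := hg.1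
    have hy₁pq : (1 - δ) * lipNorm T * dist p₀ q₀ ≤ ‖y₁ (T p₀) - y₁ (T q₀)‖ := by
      rw [Real.norm_eq_abs, ← map_sub]
      exact (hWT y₁ (hVW hy₁).1).le
    linarith [hgL.sub_lipNorm_sub_le_lipNorm (hgL.sub hy₁T) hpq₀ hy₁pq]
  obtain ⟨hRK, hRK'⟩ := hconst _ _ hR.le hLg
  exact exists_stronglyAttains_near_of_ack hΓ hT hTz (hVW hy₁).2 he hFe hy₁Fe hy₁F hρF
    (fun φ hφ => abs_apply_sub_mul_apply_le_of_flat hT (hΓ.1 y₁ (hVW hy₁).2) (hhull φ hφ) he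
      (fun v hv => hWflat v (hVW hv) y₁ (hVW hy₁)) hVe)
    hg hgatt hgT hc hRK hRK' ((lt_div_iff₀ hR).mp hδc)

/-- If `SA(M, ℝ)` is dense in `Lip₀(M, ℝ)` and `Y ∈ ACK_ρ` witnessed by the 1-norming set `Γ`,
then every `Γ`-flat map in `Lip₀(M, Y)` lies in the `‖·‖_L`-closure of `SA(M, Y)`. -/
theorem gammaFlat_mem_closure_SA {M Y : Type*} [MetricSpace M] [CompleteSpace M]
    [NormedAddCommGroup Y] [NormedSpace ℝ Y] [CompleteSpace Y]
    (z : M) (hM : SADense M z ℝ)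
    (ρ : ℝ) (hρ0 : 0 ≤ ρ) (hρ1 : ρ < 1)
    (Γ : Set (Y →L[ℝ] ℝ)) (hY : ACKWith Y ρ Γ) :
    ∀ T : M → Y, IsLip0 z T → IsGammaFlat Γ T → ∀ ε > (0 : ℝ),
      ∃ G : M → Y, IsLip0 z G ∧ StronglyAttains G ∧
        lipNorm (fun x => G x - T x) < ε :=
  gammaFlat_mem_closure_SA_general z hM ρ hρ1 Γ hY
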